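/- Suppose α is a limit ordinal such that the function β ↦ 2^{ℵ_β} is not eventually constant below α, and ℵ_α is not a strong limit. Then ℵ_α < 2^{<ℵ_α} and max{ℵ_α⁺, ℵ_α^{<ℵ_α}} = 2^{<ℵ_α}. -/

import Mathlib

open Cardinal

/-- Let `α` be a limit ordinal such that `β ↦ 2^{ℵ_β}` is not eventually constant
below `α` and `ℵ_α` is not a strong limit.  Then `ℵ_α < 2^{<ℵ_α}` and
`max {ℵ_α⁺, ℵ_α^{<ℵ_α}} = 2^{<ℵ_α}`. -/
theorem stmt_10 (α : Ordinal) (hlim : Order.IsSuccLimit α)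
    (hnec : ¬ ∃ β < α, ∀ γ, β ≤ γ → γ < α →
      (2 : Cardinal) ^ aleph γ = (2 : Cardinal) ^ aleph β)
    (hnsl : ¬ (aleph α).IsStrongLimit) :
    aleph α < (2 : Cardinal) ^< aleph α ∧
    max (Order.succ (aleph α)) (aleph α ^< aleph α) = (2 : Cardinal) ^< aleph α := by
  have hne : Nonempty (Set.Iio α) := ⟨⟨0, hlim.pos⟩⟩
  push_neg at hnec
  -- From `hnsl`, get `x < ℵ_α` with `ℵ_α ≤ 2 ^ x`.
  obtain ⟨x, hx, hx2⟩ : ∃ x < aleph α, aleph α ≤ 2 ^ x := by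
    by_contra h
    push_neg at h
    exact hnsl ⟨(aleph_pos α).ne', fun x hx => h x hx⟩
  -- Find `β < α` with `x ≤ ℵ_β`.
  have hxa : ∃ β : Set.Iio α, x ≤ aleph β := by
    have := hx
    rw [aleph_limit hlim] at this
    obtain ⟨β, hβ⟩ := exists_lt_of_lt_ciSup this
    exact ⟨β, hβ.le⟩
  obtain ⟨⟨β, hβα⟩, hxβ⟩ := hxa
  -- Key fact: for every `c < ℵ_α`, there is `γ < α` with `c ≤ ℵ_γ` and `ℵ_α ≤ 2 ^ ℵ_γ`.
  have key : ∀ c < aleph α, ∃ γ < α, c ≤ aleph γ ∧ aleph α ≤ 2 ^ aleph γ := by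
    intro c hc
    have hmax : max x c < aleph α := max_lt hx hc
    rw [aleph_limit hlim] at hmax
    obtain ⟨⟨γ, hγα⟩, hγ⟩ := exists_lt_of_lt_ciSup hmax
    refine ⟨γ, hγα, (le_max_right x c).trans hγ.le, ?_⟩
    exact hx2.trans (power_le_power_left two_ne_zero (((le_max_left x c).trans hγ.le)))
  -- First conjunct.
  have h1 : aleph α < (2 : Cardinal) ^< aleph α := by
    obtain ⟨γ, hγα, hxγ, hαγ⟩ := key x hx
    obtain ⟨δ, hγδ, hδα, hne⟩ := hnec γ hγα
    have hle : (2 : Cardinal) ^ aleph γ ≤ 2 ^ aleph δ :=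
      power_le_power_left two_ne_zero (aleph_le_aleph.2 hγδ)
    have hlt : (2 : Cardinal) ^ aleph γ < 2 ^ aleph δ := hle.lt_of_ne (Ne.symm hne)
    exact (hαγ.trans_lt hlt).trans_le (le_powerlt _ (aleph_lt_aleph.2 hδα))
  refine ⟨h1, ?_⟩
  -- `ℵ_α ^< ℵ_α = 2 ^< ℵ_α`
  have h2 : aleph α ^< aleph α = (2 : Cardinal) ^< aleph α := by
    apply le_antisymm
    · rw [powerlt_le]
      intro c hc
      obtain ⟨γ, hγα, hcγ, hαγ⟩ := key c hc
      calc aleph α ^ c ≤ (2 ^ aleph γ) ^ c := power_le_power_right hαγ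
        _ = 2 ^ (aleph γ * c) := by rw [power_mul]
        _ ≤ 2 ^ aleph γ := by
            apply power_le_power_left two_ne_zero
            calc aleph γ * c ≤ aleph γ * aleph γ :=
                  mul_le_mul_right hcγ _
              _ = aleph γ := mul_eq_self (aleph0_le_aleph γ)
        _ ≤ 2 ^< aleph α := le_powerlt _ (aleph_lt_aleph.2 hγα)
    · rw [powerlt_le]
      intro c hc
      calc (2 : Cardinal) ^ c ≤ aleph α ^ c :=
            power_le_power_right ((nat_lt_aleph0 2).le.trans (aleph0_le_aleph α))
        _ ≤ aleph α ^< aleph α := le_powerlt _ hc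
  rw [h2, max_eq_right (Order.succ_le_of_lt h1)]
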